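/- arXiv:1709.02785 — 2 statements merged into one kernel-verified Lean document; each statement's English description precedes it below -/
import Mathlib

section
/- For every matrix ρ ∈ M_d(ℂ), letting P_{j,k} = |φ_{j,k}⟩⟨φ_{j,k}| ∈ M_{d²}(ℂ) denote the orthogonal projection onto ℂ·φ_{j,k}, one has the teleportation measurement identity Σ_{j,k=0}^{d-1} (P_{j,k} ⊗ I_d)(ρ ⊗ Φ)(P_{j,k} ⊗ I_d) = (1/d²) Σ_{j,k=0}^{d-1} P_{j,k} ⊗ (T_{j,k}^* ρ T_{j,k}), an equality in M_d(ℂ) ⊗ M_{d²}(ℂ) (Kronecker products), where on the left side Φ occupies the last two tensor factors. -/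
open Matrix Complex Kronecker

noncomputable section

/-- ω = exp(2πi/d). -/
def pauliOmega (d : ℕ) : ℂ := Complex.exp (2 * Real.pi * Complex.I / d)

/-- The generalized Pauli matrix X, with X e_j = ω^j e_j. -/
def pauliX (d : ℕ) : Matrix (Fin d) (Fin d) ℂ :=
  Matrix.diagonal fun j => pauliOmega d ^ (j : ℕ)

/-- The generalized Pauli matrix Z, with Z e_j = e_{j+1 (mod d)}. -/
def pauliZ (d : ℕ) [NeZero d] : Matrix (Fin d) (Fin d) ℂ :=
  Matrix.of fun a b => if a = b + 1 then 1 else 0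

/-- T_{j,k} = X^j Z^k. -/
def pauliT (d : ℕ) [NeZero d] (j k : ℕ) : Matrix (Fin d) (Fin d) ℂ :=
  pauliX d ^ j * pauliZ d ^ k

/-- The coordinates of the maximally entangled vector φ_{j,k} = (T_{j,k} ⊗ I)φ. -/
def phiFun (d : ℕ) [NeZero d] (j k : Fin d) : Fin d × Fin d → ℂ :=
  fun p => if p.1 = p.2 + k then (Real.sqrt d : ℂ)⁻¹ * pauliOmega d ^ ((j : ℕ) * (p.1 : ℕ)) else 0

/-- The density matrix Φ = |φ⟩⟨φ| = (1/d) Σ_{j,k} e_{jk} ⊗ e_{jk} of the maximally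
entangled state, as a matrix in M_d(ℂ) ⊗ M_d(ℂ) via the Kronecker product. -/
def maxEntangled (d : ℕ) : Matrix (Fin d × Fin d) (Fin d × Fin d) ℂ :=
  (d : ℂ)⁻¹ • ∑ j : Fin d, ∑ k : Fin d,
    (Matrix.single j k (1 : ℂ)) ⊗ₖ (Matrix.single j k (1 : ℂ))

/-- The rank-one operator |φ_{j,k}⟩⟨φ_{j',k'}| ∈ M_{d²}(ℂ), sending x to ⟨φ_{j',k'}, x⟩·φ_{j,k}. -/
def phiOuter (d : ℕ) [NeZero d] (j k j' k' : Fin d) :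
    Matrix (Fin d × Fin d) (Fin d × Fin d) ℂ :=
  Matrix.vecMulVec (phiFun d j k) (fun q => star (phiFun d j' k' q))


/-- The orthogonal projection P_{j,k} = |φ_{j,k}⟩⟨φ_{j,k}| onto ℂ·φ_{j,k}. -/
def phiProj (d : ℕ) [NeZero d] (j k : Fin d) : Matrix (Fin d × Fin d) (Fin d × Fin d) ℂ :=
  phiOuter d j k j k

/-! Write `P_{j,k} = |u⟩⟨u|` with `u = φ_{j,k}`. Sandwiching `ρ ⊗ Φ` between `P_{j,k} ⊗ I` gives
`P_{j,k} ⊗ E`, where `E` contracts `⟨u| ⊗ I` against `ρ ⊗ Φ` and `|u⟩ ⊗ I` over the first two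
factors. Since `φ_{j,k}` is the vectorisation of `T_{j,k} / √d` and `Φ = d⁻¹ Σ e_{jk} ⊗ e_{jk}`
identifies the second factor with the third, `E = d⁻¹ (T_{j,k} / √d)ᴴ ρ (T_{j,k} / √d)`. -/

namespace Matrix

variable {R m n p : Type*} [CommSemiring R] [Fintype m] [Fintype n] [Fintype p] [DecidableEq p]

theorem reindex_vecMulVec_kronecker_one_mul_kronecker_mul (u w : m × n → R)
    (ρ : Matrix m m R) (Φ : Matrix (n × p) (n × p) R) :
    reindex (Equiv.prodAssoc m n p) (Equiv.prodAssoc m n p)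
          (vecMulVec u w ⊗ₖ (1 : Matrix p p R)) *
        (ρ ⊗ₖ Φ) *
        reindex (Equiv.prodAssoc m n p) (Equiv.prodAssoc m n p)
          (vecMulVec u w ⊗ₖ (1 : Matrix p p R)) =
      reindex (Equiv.prodAssoc m n p) (Equiv.prodAssoc m n p)
        (vecMulVec u w ⊗ₖ of fun c c' =>
          ∑ x', ∑ y', ∑ x, ∑ y, w (x, y) * ρ x x' * Φ (y, c) (y', c') * u (x', y')) := by
  ext ⟨a, b, c⟩ ⟨a', b', c'⟩
  simp only [mul_apply, reindex_apply, submatrix_apply, Equiv.prodAssoc_symm_apply,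
    kroneckerMap_apply, one_apply, vecMulVec_apply, of_apply, Fintype.sum_prod_type]
  simp only [mul_ite, mul_one, mul_zero, ite_mul, zero_mul, Finset.sum_ite_eq, Finset.sum_ite_eq',
    Finset.mem_univ, if_true, Finset.sum_mul, Finset.mul_sum]
  refine Finset.sum_congr rfl fun _ _ => Finset.sum_congr rfl fun _ _ =>
    Finset.sum_congr rfl fun _ _ => Finset.sum_congr rfl fun _ _ => by ring

end Matrix

open Fin.NatCast

section Teleportation

variable (d : ℕ)

theorem maxEntangled_apply (p q : Fin d × Fin d) :
    maxEntangled d p q = if p.1 = p.2 ∧ q.1 = q.2 then (d : ℂ)⁻¹ else 0 := by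
  simp [maxEntangled, Matrix.sum_apply, single, ite_and, eq_comm]

variable [NeZero d]

theorem pauliZ_pow (k : ℕ) :
    pauliZ d ^ k = of fun a b => if a = b + (k : Fin d) then 1 else 0 := by
  induction k with
  | zero => ext a b; simp [one_apply]
  | succ k ih =>
    ext a b
    rw [pow_succ, ih, mul_apply, Finset.sum_eq_single (b + 1)]
    · simp [pauliZ, add_assoc, add_comm (1 : Fin d)]
    · intro c _ hc; simp [pauliZ, hc]
    · simp

theorem pauliT_apply (j k : ℕ) (a b : Fin d) :
    pauliT d j k a b = if a = b + (k : Fin d) then pauliOmega d ^ (j * (a : ℕ)) else 0 := by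
  simp [pauliT, pauliZ_pow, pauliX, diagonal_pow, ← pow_mul, Nat.mul_comm]

theorem phiFun_apply (j k : Fin d) (a b : Fin d) :
    phiFun d j k (a, b) = (Real.sqrt d : ℂ)⁻¹ * pauliT d j k a b := by
  simp [phiFun, pauliT_apply]

theorem phiProj_kronecker_one_sandwich (ρ : Matrix (Fin d) (Fin d) ℂ) (j k : Fin d) :
    reindex (Equiv.prodAssoc _ _ _) (Equiv.prodAssoc _ _ _)
          (phiProj d j k ⊗ₖ (1 : Matrix (Fin d) (Fin d) ℂ)) *
        (ρ ⊗ₖ maxEntangled d) *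
        reindex (Equiv.prodAssoc _ _ _) (Equiv.prodAssoc _ _ _)
          (phiProj d j k ⊗ₖ (1 : Matrix (Fin d) (Fin d) ℂ)) =
      ((d : ℂ) ^ 2)⁻¹ • reindex (Equiv.prodAssoc _ _ _) (Equiv.prodAssoc _ _ _)
        (phiProj d j k ⊗ₖ ((pauliT d j k)ᴴ * ρ * pauliT d j k)) := by
  have smul_reindex (r : ℂ) (X : Matrix ((Fin d × Fin d) × Fin d) ((Fin d × Fin d) × Fin d) ℂ) :
      r • reindex (Equiv.prodAssoc _ _ _) (Equiv.prodAssoc _ _ _) X =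
        reindex (Equiv.prodAssoc _ _ _) (Equiv.prodAssoc _ _ _) (r • X) := rfl
  rw [phiProj, phiOuter, reindex_vecMulVec_kronecker_one_mul_kronecker_mul, smul_reindex,
    ← kronecker_smul]
  congr 2
  ext c c'
  have hscalar : ((d : ℂ) ^ 2)⁻¹ = (Real.sqrt d : ℂ)⁻¹ * (Real.sqrt d : ℂ)⁻¹ * (d : ℂ)⁻¹ := by
    rw [← mul_inv, ← Complex.ofReal_mul, Real.mul_self_sqrt (Nat.cast_nonneg d), ← mul_inv, sq]
    simp
  simp only [phiFun_apply, star_mul', star_inv₀, RCLike.star_def, conj_ofReal, maxEntangled_apply,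
    ite_and, mul_ite, mul_zero, ite_mul, zero_mul, Finset.sum_ite_eq', Finset.mem_univ, if_true,
    Finset.sum_ite_irrel, Finset.sum_const_zero, of_apply, hscalar, Matrix.smul_apply, mul_apply,
    conjTranspose_apply, Finset.sum_mul, smul_eq_mul, Finset.mul_sum]
  exact Finset.sum_congr rfl fun _ _ => Finset.sum_congr rfl fun _ _ => by ring

end Teleportation

theorem statement4_general (d : ℕ) [NeZero d] (ρ : Matrix (Fin d) (Fin d) ℂ) :
    ∑ j : Fin d, ∑ k : Fin d,
      (Matrix.reindex (Equiv.prodAssoc (Fin d) (Fin d) (Fin d))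
          (Equiv.prodAssoc (Fin d) (Fin d) (Fin d))
          (phiProj d j k ⊗ₖ (1 : Matrix (Fin d) (Fin d) ℂ))) *
        (ρ ⊗ₖ maxEntangled d) *
        (Matrix.reindex (Equiv.prodAssoc (Fin d) (Fin d) (Fin d))
          (Equiv.prodAssoc (Fin d) (Fin d) (Fin d))
          (phiProj d j k ⊗ₖ (1 : Matrix (Fin d) (Fin d) ℂ))) =
    ((d : ℂ) ^ 2)⁻¹ • ∑ j : Fin d, ∑ k : Fin d,
      Matrix.reindex (Equiv.prodAssoc (Fin d) (Fin d) (Fin d))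
        (Equiv.prodAssoc (Fin d) (Fin d) (Fin d))
        (phiProj d j k ⊗ₖ ((pauliT d (j : ℕ) (k : ℕ))ᴴ * ρ * pauliT d (j : ℕ) (k : ℕ))) := by
  simp only [phiProj_kronecker_one_sandwich, Finset.smul_sum]

/-- The teleportation measurement identity
Σ_{j,k} (P_{j,k} ⊗ I)(ρ ⊗ Φ)(P_{j,k} ⊗ I) = (1/d²) Σ_{j,k} P_{j,k} ⊗ (T_{j,k}^* ρ T_{j,k}). -/
theorem statement4 (d : ℕ) (hd : 2 ≤ d) [NeZero d] (ρ : Matrix (Fin d) (Fin d) ℂ) :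
    ∑ j : Fin d, ∑ k : Fin d,
      (Matrix.reindex (Equiv.prodAssoc (Fin d) (Fin d) (Fin d))
          (Equiv.prodAssoc (Fin d) (Fin d) (Fin d))
          (phiProj d j k ⊗ₖ (1 : Matrix (Fin d) (Fin d) ℂ))) *
        (ρ ⊗ₖ maxEntangled d) *
        (Matrix.reindex (Equiv.prodAssoc (Fin d) (Fin d) (Fin d))
          (Equiv.prodAssoc (Fin d) (Fin d) (Fin d))
          (phiProj d j k ⊗ₖ (1 : Matrix (Fin d) (Fin d) ℂ))) =
    ((d : ℂ) ^ 2)⁻¹ • ∑ j : Fin d, ∑ k : Fin d,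
      Matrix.reindex (Equiv.prodAssoc (Fin d) (Fin d) (Fin d))
        (Equiv.prodAssoc (Fin d) (Fin d) (Fin d))
        (phiProj d j k ⊗ₖ ((pauliT d (j : ℕ) (k : ℕ))ᴴ * ρ * pauliT d (j : ℕ) (k : ℕ))) :=
  statement4_general d ρ
end
end

section
/- Let G = (ℤ/2ℤ) ∗ (ℤ/2ℤ) ∗ (ℤ/2ℤ) be the free product of three cyclic groups of order 2, with σ_0, σ_1, σ_2 denoting the images in G of the nontrivial elements of the three factors. Then there is an injective group homomorphism from (ℤ/2ℤ) ∗ (ℤ/2ℤ) ∗ ℤ into G sending the nontrivial elements of the two ℤ/2ℤ factors to σ_0 and σ_1 respectively, and the generator of ℤ to σ_2σ_0σ_1σ_2. -/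
/-! Ping-pong on reduced words of `∗ᵢ Gᵢ`, the three ping-pong sets being the words whose first
letter lies in `G i`, `G j`, `G k`. A nontrivial letter `x` of a factor pushes every word not
beginning in that factor into it. For `n ≠ 0` the power `(x y)ⁿ` pushes a word beginning in `G k`
to one beginning in `G i` or `G j`, hence `(z (x y) z⁻¹)ⁿ` pushes every word not beginning in `G k`
into `G k`. For the theorem take all three letters equal to the involution `σ`, so that
`z (x y) z⁻¹ = σ₂σ₀σ₁σ₂`. -/

namespace Monoid.CoprodI.Word

variable {ι : Type*} [DecidableEq ι]

section Monoid

variable {M : ι → Type*} [∀ i, Monoid (M i)] [∀ i, DecidableEq (M i)]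

theorem fstIdx_of_smul {i : ι} {x : M i} (hx : x ≠ 1) {w : Word M} (hw : w.fstIdx ≠ some i) :
    (of x • w).fstIdx = some i := by
  rw [← cons_eq_smul (h1 := hw) (h2 := hx), fstIdx_cons]

variable {i j : ι} {x : M i} {y : M j}

theorem fstIdx_of_mul_of_smul (hij : i ≠ j) (hx : x ≠ 1) (hy : y ≠ 1) {w : Word M}
    (hw : w.fstIdx ≠ some j) : ((of x * of y) • w).fstIdx = some i := by
  rw [mul_smul]
  exact fstIdx_of_smul hx (by simpa [fstIdx_of_smul hy hw] using hij.symm)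

theorem fstIdx_of_mul_of_pow_smul (hij : i ≠ j) (hx : x ≠ 1) (hy : y ≠ 1) {n : ℕ} (hn : 0 < n)
    {w : Word M} (hw : w.fstIdx ≠ some j) : ((of x * of y) ^ n • w).fstIdx = some i := by
  induction n, hn using Nat.le_induction with
  | base => rw [pow_one]; exact fstIdx_of_mul_of_smul hij hx hy hw
  | succ n _ ih =>
    rw [pow_succ', mul_smul]
    exact fstIdx_of_mul_of_smul hij hx hy (by simpa [ih] using hij)

end Monoid

variable {G : ι → Type*} [∀ i, Group (G i)] [∀ i, DecidableEq (G i)] {i j : ι} {x : G i} {y : G j}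

theorem fstIdx_of_mul_of_zpow_smul (hij : i ≠ j) (hx : x ≠ 1) (hy : y ≠ 1) {n : ℤ} (hn : n ≠ 0)
    {w : Word G} (hwi : w.fstIdx ≠ some i) (hwj : w.fstIdx ≠ some j) :
    ((of x * of y) ^ n • w).fstIdx = some i ∨ ((of x * of y) ^ n • w).fstIdx = some j := by
  obtain ⟨m, rfl | rfl⟩ := Int.eq_nat_or_neg n
  · left
    rw [zpow_natCast]
    exact fstIdx_of_mul_of_pow_smul hij hx hy (by omega) hwj
  · right
    rw [zpow_neg, zpow_natCast, ← inv_pow, mul_inv_rev, ← map_inv, ← map_inv]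
    exact fstIdx_of_mul_of_pow_smul hij.symm (inv_ne_one.2 hy) (inv_ne_one.2 hx) (by omega) hwi

theorem fstIdx_conj_zpow_smul {k : ι} (hij : i ≠ j) (hik : i ≠ k) (hjk : j ≠ k) (hx : x ≠ 1)
    (hy : y ≠ 1) {z : G k} (hz : z ≠ 1) {n : ℤ} (hn : n ≠ 0) {w : Word G}
    (hw : w.fstIdx ≠ some k) : ((of z * (of x * of y) * (of z)⁻¹) ^ n • w).fstIdx = some k := by
  have h₁ : ((of z)⁻¹ • w).fstIdx = some k := by
    rw [← map_inv]; exact fstIdx_of_smul (inv_ne_one.2 hz) hw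
  have h₂ := fstIdx_of_mul_of_zpow_smul hij hx hy hn (w := (of z)⁻¹ • w)
    (by simpa [h₁] using hik.symm) (by simpa [h₁] using hjk.symm)
  rw [conj_zpow, mul_smul, mul_smul]
  exact fstIdx_of_smul hz (by rcases h₂ with h | h <;> simp [h, hik, hjk])

end Monoid.CoprodI.Word

universe u

namespace Monoid.Coprod

variable (A B C : Type u) [Group A] [Group B] [Group C]

-- Mathlib's ping-pong lemma concerns indexed free products; this presents `A ∗ (B ∗ C)` as one.
def tripleFamily : Fin 3 → Type u
  | 0 => A
  | 1 => B
  | 2 => C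

instance instGroupTripleFamily : ∀ a, Group (tripleFamily A B C a)
  | 0 => inferInstanceAs (Group A)
  | 1 => inferInstanceAs (Group B)
  | 2 => inferInstanceAs (Group C)

variable {A B C} {N : Type*} [Monoid N]

def tripleHom (f : A →* N) (g : B →* N) (h : C →* N) : ∀ a, tripleFamily A B C a →* N
  | 0 => f
  | 1 => g
  | 2 => h

variable (A B C)

def equivCoprodITripleFamily : A ∗ (B ∗ C) ≃* CoprodI (tripleFamily A B C) :=
  MonoidHom.toMulEquiv
    (lift (CoprodI.of (M := tripleFamily A B C) (i := 0))
      (lift (CoprodI.of (M := tripleFamily A B C) (i := 1))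
        (CoprodI.of (M := tripleFamily A B C) (i := 2))))
    (CoprodI.lift (tripleHom inl (inr.comp inl) (inr.comp inr)))
    (by ext <;> rfl)
    (by
      refine CoprodI.ext_hom _ _ fun a => ?_
      fin_cases a <;> ext <;> rfl)

theorem lift_comp_equivCoprodITripleFamily (f : A →* N) (g : B →* N) (h : C →* N) :
    (CoprodI.lift (tripleHom f g h)).comp (equivCoprodITripleFamily A B C).toMonoidHom =
      lift f (lift g h) := by
  ext <;> rfl

end Monoid.Coprod

namespace Monoid.CoprodI

variable {ι : Type*} {G : ι → Type} [∀ i, Group (G i)]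

open Word in
theorem coprod_lift_of_of_zpowersHom_conj_injective {i j k : ι} (hij : i ≠ j) (hik : i ≠ k)
    (hjk : j ≠ k) {x : G i} {y : G j} {z : G k} (hx : x ≠ 1) (hy : y ≠ 1) (hz : z ≠ 1) :
    Function.Injective (Coprod.lift (of (i := i)) (Coprod.lift (of (i := j))
      (zpowersHom _ (of z * (of x * of y) * (of z)⁻¹)))) := by
  classical
  rw [← Coprod.lift_comp_equivCoprodITripleFamily, MonoidHom.coe_comp]
  refine Function.Injective.comp ?_ (MulEquiv.injective _)
  set idx : Fin 3 → ι := ![i, j, k]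
  have idx_injective : Function.Injective idx := by
    intro a b hab; fin_cases a <;> fin_cases b <;> simp_all [idx, eq_comm]
  refine lift_injective_of_ping_pong _ (Or.inl (by simp))
    (fun a => {w : Word G | w.fstIdx = some (idx a)}) (fun a => ?_) (fun a b hab => ?_)
    (fun a b hab h hh => ?_)
  · fin_cases a
    exacts [⟨of x • empty, fstIdx_of_smul hx nofun⟩, ⟨of y • empty, fstIdx_of_smul hy nofun⟩,
      ⟨of z • empty, fstIdx_of_smul hz nofun⟩]
  · exact Set.disjoint_left.2 fun w ha hb =>
      hab (idx_injective (Option.some_injective _ (ha.symm.trans hb)))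
  · rintro _ ⟨w, hw, rfl⟩
    have hw' : w.fstIdx ≠ some (idx a) := by
      rw [hw]; simpa using idx_injective.ne hab.symm
    fin_cases a
    · exact fstIdx_of_smul (M := G) (x := h) hh hw'
    · exact fstIdx_of_smul (M := G) (x := h) hh hw'
    · exact fstIdx_conj_zpow_smul hij hik hjk hx hy hz (toAdd_eq_zero.not.2 hh) hw'

end Monoid.CoprodI

/-- There is an injective group homomorphism from ℤ/2 ∗ ℤ/2 ∗ ℤ into the free
product G = ℤ/2 ∗ ℤ/2 ∗ ℤ/2 (with σᵢ the images in G of the nontrivial elements of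
the three factors), sending the nontrivial elements of the two ℤ/2 factors to σ₀
and σ₁, and the generator of ℤ to σ₂σ₀σ₁σ₂. -/
theorem statement16 :
    ∃ f : Monoid.Coprod (Multiplicative (ZMod 2))
        (Monoid.Coprod (Multiplicative (ZMod 2)) (Multiplicative ℤ)) →*
        Monoid.CoprodI (fun _ : Fin 3 => Multiplicative (ZMod 2)),
      Function.Injective f ∧
      f (Monoid.Coprod.inl (Multiplicative.ofAdd (1 : ZMod 2))) =
        Monoid.CoprodI.of (M := fun _ : Fin 3 => Multiplicative (ZMod 2)) (i := 0)
          (Multiplicative.ofAdd (1 : ZMod 2)) ∧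
      f (Monoid.Coprod.inr (Monoid.Coprod.inl (Multiplicative.ofAdd (1 : ZMod 2)))) =
        Monoid.CoprodI.of (M := fun _ : Fin 3 => Multiplicative (ZMod 2)) (i := 1)
          (Multiplicative.ofAdd (1 : ZMod 2)) ∧
      f (Monoid.Coprod.inr (Monoid.Coprod.inr (Multiplicative.ofAdd (1 : ℤ)))) =
        Monoid.CoprodI.of (M := fun _ : Fin 3 => Multiplicative (ZMod 2)) (i := 2)
            (Multiplicative.ofAdd (1 : ZMod 2)) *
          Monoid.CoprodI.of (M := fun _ : Fin 3 => Multiplicative (ZMod 2)) (i := 0)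
            (Multiplicative.ofAdd (1 : ZMod 2)) *
          Monoid.CoprodI.of (M := fun _ : Fin 3 => Multiplicative (ZMod 2)) (i := 1)
            (Multiplicative.ofAdd (1 : ZMod 2)) *
          Monoid.CoprodI.of (M := fun _ : Fin 3 => Multiplicative (ZMod 2)) (i := 2)
            (Multiplicative.ofAdd (1 : ZMod 2)) := by
  set σ : Multiplicative (ZMod 2) := Multiplicative.ofAdd 1
  have hσ : σ ≠ 1 := by decide
  have hinj := Monoid.CoprodI.coprod_lift_of_of_zpowersHom_conj_injective
    (G := fun _ : Fin 3 => Multiplicative (ZMod 2)) (i := 0) (j := 1) (k := 2)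
    (by decide) (by decide) (by decide) hσ hσ hσ
  refine ⟨_, hinj, rfl, rfl, ?_⟩
  rw [Monoid.Coprod.lift_apply_inr, Monoid.Coprod.lift_apply_inr, zpowersHom_apply, toAdd_ofAdd,
    zpow_one, ← map_inv, show σ⁻¹ = σ by decide, ← mul_assoc]
end
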